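/- arXiv:2211.17113 — 8 statements merged into one kernel-verified Lean document; each statement's English description precedes it below -/
import Mathlib

section
/- There exists a labeled multi-relational graph G with two relations and two vertices v, w such that the (strong) multi-relational 1-WL distinguishes v and w after one iteration (C_R^(1)(v) ≠ C_R^(1)(w)), but the weak multi-relational 1-WL never distinguishes them (C_WR^(t)(v) = C_WR^(t)(w) for all t). Concretely, V = {v, w, u_1, u_2}, R_1 = {(v,u_1),(w,u_2)}, R_2 = {(v,u_2),(w,u_1)}, ℓ(v)=ℓ(w)=0, ℓ(u_1)=1, ℓ(u_2)=2 is such a graph. -/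
/-- Strong multi-relational 1-WL message: multiset of `(color of u, relation i)`. -/
def rwlMsg {V : Type*} {r : ℕ} (N : Fin r → V → Finset V)
    (c : V → ℕ) (v : V) : Multiset (ℕ × ℕ) :=
  ∑ i : Fin r, (N i v).val.map (fun u => (c u, (i : ℕ)))

/-- Weak multi-relational 1-WL message: multiset of neighbor colors, forgetting
which relation each color came from. -/
def wrwlMsg {V : Type*} {r : ℕ} (N : Fin r → V → Finset V)
    (c : V → ℕ) (v : V) : Multiset ℕ :=
  ∑ i : Fin r, (N i v).val.map c

/-- The concrete graph of Proposition 3: `V = {v, w, u₁, u₂}` encoded as `Fin 4`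
with `v = 0, w = 1, u₁ = 2, u₂ = 3`; `R₁ = {(v,u₁),(w,u₂)}`, `R₂ = {(v,u₂),(w,u₁)}`. -/
def sepN : Fin 2 → Fin 4 → Finset (Fin 4)
  | 0, 0 => {2}
  | 0, 1 => {3}
  | 0, 2 => {0}
  | 0, 3 => {1}
  | 1, 0 => {3}
  | 1, 1 => {2}
  | 1, 2 => {1}
  | 1, 3 => {0}

/-- Labels `ℓ(v) = ℓ(w) = 0`, `ℓ(u₁) = 1`, `ℓ(u₂) = 2`. -/
def sepLab : Fin 4 → ℕ
  | 0 => 0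
  | 1 => 0
  | 2 => 1
  | 3 => 2

/-- on this concrete two-relation graph, the strong multi-relational
1-WL distinguishes `v = 0` and `w = 1` after one iteration, while the weak variant
never distinguishes them. -/
theorem weak_strictly_weaker
    (CR CWR : ℕ → Fin 4 → ℕ)
    (hR0 : ∀ v w, CR 0 v = CR 0 w ↔ sepLab v = sepLab w)
    (hR : ∀ t v w, CR (t + 1) v = CR (t + 1) w ↔
      (CR t v = CR t w ∧ rwlMsg sepN (CR t) v = rwlMsg sepN (CR t) w))
    (hW0 : ∀ v w, CWR 0 v = CWR 0 w ↔ sepLab v = sepLab w)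
    (hW : ∀ t v w, CWR (t + 1) v = CWR (t + 1) w ↔
      (CWR t v = CWR t w ∧ wrwlMsg sepN (CWR t) v = wrwlMsg sepN (CWR t) w ∧
        ∀ i, (sepN i v).card = (sepN i w).card)) :
    CR 1 0 ≠ CR 1 1 ∧ ∀ t, CWR t 0 = CWR t 1 := by
  constructor
  · intro h
    have h2 := (hR 0 0 1).mp h
    have hmsg := h2.2
    simp only [rwlMsg, Fin.sum_univ_two] at hmsg
    have e0 : sepN 0 0 = {2} := rfl
    have e1 : sepN 1 0 = {3} := rfl
    have e2 : sepN 0 1 = {3} := rfl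
    have e3 : sepN 1 1 = {2} := rfl
    rw [e0, e1, e2, e3] at hmsg
    simp only [Finset.singleton_val, Multiset.map_singleton, Fin.val_zero, Fin.val_one] at hmsg
    have hmem : ((CR 0 2, (0:ℕ)) : ℕ × ℕ) ∈
        ({(CR 0 3, (0:ℕ))} + {(CR 0 2, (1:ℕ))} : Multiset (ℕ × ℕ)) := by
      rw [← hmsg]; simp
    have : CR 0 2 = CR 0 3 := by
      rcases Multiset.mem_add.mp hmem with h' | h' <;> simp_all
    have := (hR0 2 3).mp this
    simp [sepLab] at this
  · intro t
    induction t with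
    | zero => exact (hW0 0 1).mpr rfl
    | succ t ih =>
      refine (hW t 0 1).mpr ⟨ih, ?_, ?_⟩
      · simp only [wrwlMsg, Fin.sum_univ_two]
        have e0 : sepN 0 0 = {2} := rfl
        have e1 : sepN 1 0 = {3} := rfl
        have e2 : sepN 0 1 = {3} := rfl
        have e3 : sepN 1 1 = {2} := rfl
        rw [e0, e1, e2, e3]
        simp only [Finset.singleton_val, Multiset.map_singleton]
        exact add_comm _ _
      · intro i
        fin_cases i <;> rfl
end

section
/- For every labeled multi-relational graph G and every t ≥ 0: if C_R^(t)(v) = C_R^(t)(w) for vertices v, w, then C_WR^(t)(v) = C_WR^(t)(w). That is, the weak multi-relational 1-WL is coarser than (refined by) the strong multi-relational 1-WL at every iteration. -/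
/-! The strong message determines the weak one: forgetting the relation label of each pair gives
the multiset of neighbour colours, and counting the pairs labelled `i` gives `|N_i(v)|`. Since
`C_R^(t)` refines `C_WR^(t)` (induction on `t`), `C_WR^(t)` is a function of `C_R^(t)`, and applying
it to the colour entries carries the strong message into the weak one. -/

section Messages

variable {V : Type*} {r : ℕ} (N : Fin r → V → Finset V) (c : V → ℕ) (v : V)

theorem map_fst_rwlMsg (f : ℕ → ℕ) :
    (rwlMsg N c v).map (f ∘ Prod.fst) = wrwlMsg N (f ∘ c) v := by
  rw [rwlMsg, wrwlMsg, ← Multiset.coe_mapAddMonoidHom, map_sum]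
  simp only [Multiset.coe_mapAddMonoidHom, Multiset.map_map]
  rfl

theorem count_map_snd_rwlMsg (i : Fin r) :
    ((rwlMsg N c v).map Prod.snd).count (i : ℕ) = (N i v).card := by
  rw [rwlMsg, ← Multiset.coe_mapAddMonoidHom, map_sum, Multiset.count_sum',
    Finset.sum_eq_single i]
  · simp [Multiset.map_const']
  · intro j _ hji
    simp [Multiset.map_const', Multiset.count_replicate, Fin.val_ne_of_ne hji]
  · simp

variable {N c v}

theorem wrwlMsg_eq_of_rwlMsg_eq {c' : V → ℕ} (hc : c'.FactorsThrough c) {w : V}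
    (h : rwlMsg N c v = rwlMsg N c w) : wrwlMsg N c' v = wrwlMsg N c' w := by
  have hc' : Function.extend c c' 0 ∘ c = c' := funext (hc.extend_apply 0)
  rw [← hc', ← map_fst_rwlMsg, ← map_fst_rwlMsg, h]

theorem card_eq_of_rwlMsg_eq {w : V} (h : rwlMsg N c v = rwlMsg N c w) (i : Fin r) :
    (N i v).card = (N i w).card := by
  rw [← count_map_snd_rwlMsg N c v, ← count_map_snd_rwlMsg N c w, h]

end Messages

theorem weak_coarser_than_strong_general {V : Type*} {r : ℕ}
    (N : Fin r → V → Finset V) (ℓ : V → ℕ) (CR CWR : ℕ → V → ℕ)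
    (hR0 : ∀ v w, CR 0 v = CR 0 w ↔ ℓ v = ℓ w)
    (hR : ∀ t v w, CR (t + 1) v = CR (t + 1) w ↔
      (CR t v = CR t w ∧ rwlMsg N (CR t) v = rwlMsg N (CR t) w))
    (hW0 : ∀ v w, CWR 0 v = CWR 0 w ↔ ℓ v = ℓ w)
    (hW : ∀ t v w, CWR (t + 1) v = CWR (t + 1) w ↔
      (CWR t v = CWR t w ∧ wrwlMsg N (CWR t) v = wrwlMsg N (CWR t) w ∧
        ∀ i, (N i v).card = (N i w).card)) :
    ∀ t (v w : V), CR t v = CR t w → CWR t v = CWR t w := by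
  intro t
  induction t with
  | zero => exact fun v w h => (hW0 v w).2 ((hR0 v w).1 h)
  | succ t ih =>
    intro v w h
    obtain ⟨hcol, hmsg⟩ := (hR t v w).1 h
    exact (hW t v w).2 ⟨ih v w hcol, wrwlMsg_eq_of_rwlMsg_eq (fun a b => ih a b) hmsg,
      card_eq_of_rwlMsg_eq hmsg⟩

/-- at every iteration, the weak multi-relational 1-WL coloring is
coarser than (refined by) the strong multi-relational 1-WL coloring. -/
theorem weak_coarser_than_strong {V : Type*} [Fintype V] {r : ℕ}
    (N : Fin r → V → Finset V) (ℓ : V → ℕ) (CR CWR : ℕ → V → ℕ)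
    (hR0 : ∀ v w, CR 0 v = CR 0 w ↔ ℓ v = ℓ w)
    (hR : ∀ t v w, CR (t + 1) v = CR (t + 1) w ↔
      (CR t v = CR t w ∧ rwlMsg N (CR t) v = rwlMsg N (CR t) w))
    (hW0 : ∀ v w, CWR 0 v = CWR 0 w ↔ ℓ v = ℓ w)
    (hW : ∀ t v w, CWR (t + 1) v = CWR (t + 1) w ↔
      (CWR t v = CWR t w ∧ wrwlMsg N (CWR t) v = wrwlMsg N (CWR t) w ∧
        ∀ i, (N i v).card = (N i w).card)) :
    ∀ t (v w : V), CR t v = CR t w → CWR t v = CWR t w :=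
  weak_coarser_than_strong_general N ℓ CR CWR hR0 hR hW0 hW
end

section
/- Let B ∈ ℕ^{s×t} be a matrix whose rows are pairwise distinct. Then there exists a matrix X ∈ ℝ^{t×s} such that the matrix sign(BX − J) ∈ {−1, 1}^{s×s} is non-singular, where J is the all-ones s×s matrix and sign is applied entrywise. -/
lemma detL_ne_zero (s : ℕ) :
    (Matrix.of fun i j : Fin s => if (j:ℕ) ≤ (i:ℕ) then (1:ℝ) else -1).det ≠ 0 := by
  set L : Matrix (Fin s) (Fin s) ℝ :=
    Matrix.of fun i j : Fin s => if (j:ℕ) ≤ (i:ℕ) then (1:ℝ) else -1 with hL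
  rcases Nat.eq_zero_or_pos s with hs | hs
  · subst hs; simp [Matrix.det_fin_zero]
  · set q : Fin s → Fin s := fun i =>
      if (i:ℕ) = 0 then ⟨s-1, Nat.sub_lt hs one_pos⟩
      else ⟨(i:ℕ)-1, lt_of_le_of_lt (Nat.sub_le _ _) i.isLt⟩ with hq
    set e : Fin s → ℝ := fun i => if (i:ℕ) = 0 then 1/2 else -(1/2) with he
    set C : Matrix (Fin s) (Fin s) ℝ :=
      Matrix.of fun i k => (if k = i then (1:ℝ)/2 else 0) + (if k = q i then e i else 0) with hC
    have hmul : C * L = 1 := by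
      ext i j
      have : (C * L) i j = (1/2) * L i j + e i * L (q i) j := by
        simp [Matrix.mul_apply, hC, add_mul, ite_mul, Finset.sum_add_distrib]
      rw [this]
      rcases Nat.eq_zero_or_pos (i:ℕ) with hi | hi
      · have hqi : ((q i : Fin s) : ℕ) = s - 1 := by simp [hq, hi]
        have hji : (j:ℕ) ≤ s - 1 := by omega
        have h2 : (j:ℕ) < s := j.isLt
        simp only [hL, Matrix.of_apply, Matrix.one_apply, he, hi, if_pos rfl, hqi, if_pos hji]
        by_cases hij : i = j
        · have hj0 : (j:ℕ) ≤ 0 := by rw [← hij]; omega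
          rw [if_pos hij, if_pos hj0]; norm_num
        · have hj0 : ¬ (j:ℕ) ≤ 0 := fun h => hij (Fin.ext (by omega))
          rw [if_neg hij, if_neg hj0]; norm_num
      · have hi0 : (i:ℕ) ≠ 0 := by omega
        have hqi : ((q i : Fin s) : ℕ) = (i:ℕ) - 1 := by simp [hq, hi0]
        simp only [hL, Matrix.of_apply, Matrix.one_apply, he, if_neg hi0, hqi]
        by_cases hij : i = j
        · rw [if_pos hij]
          have h1 : (j:ℕ) ≤ (i:ℕ) := le_of_eq (by rw [hij])
          have h2 : ¬ (j:ℕ) ≤ (i:ℕ) - 1 := by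
            have : (i:ℕ) = (j:ℕ) := by rw [hij]
            omega
          rw [if_pos h1, if_neg h2]; norm_num
        · rw [if_neg hij]
          have hne : (i:ℕ) ≠ (j:ℕ) := fun h => hij (Fin.ext h)
          by_cases h1 : (j:ℕ) ≤ (i:ℕ)
          · have h2 : (j:ℕ) ≤ (i:ℕ) - 1 := by omega
            rw [if_pos h1, if_pos h2]; norm_num
          · have h2 : ¬ (j:ℕ) ≤ (i:ℕ) - 1 := by omega
            rw [if_neg h1, if_neg h2]; norm_num
    intro hdet
    have := congrArg Matrix.det hmul
    rw [Matrix.det_mul, hdet, Matrix.det_one, mul_zero] at this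
    exact one_ne_zero this.symm


lemma exists_inj_eval {s t : ℕ} (B : Matrix (Fin s) (Fin t) ℕ)
    (hB : ∀ i j : Fin s, i ≠ j → B i ≠ B j) :
    ∃ x : ℝ, Function.Injective (fun i : Fin s => ∑ k : Fin t, (B i k : ℝ) * x ^ (k:ℕ)) := by
  set p : Fin s → Polynomial ℝ :=
    fun i => ∑ k : Fin t, Polynomial.monomial (k:ℕ) ((B i k : ℝ)) with hp
  have hcoef : ∀ (i : Fin s) (k : Fin t), (p i).coeff (k:ℕ) = (B i k : ℝ) := by
    intro i k
    rw [hp]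
    simp only [Polynomial.finset_sum_coeff, Polynomial.coeff_monomial]
    rw [Finset.sum_eq_single k]
    · simp
    · intro b _ hbk
      rw [if_neg]
      exact fun h => hbk (Fin.ext h)
    · simp
  have hpne : ∀ i j : Fin s, i ≠ j → p i - p j ≠ 0 := by
    intro i j hne h0
    apply hB i j hne
    funext k
    have : (p i).coeff (k:ℕ) = (p j).coeff (k:ℕ) := by
      have := sub_eq_zero.mp h0
      rw [this]
    rw [hcoef, hcoef] at this
    exact_mod_cast this
  set S : Set ℝ := ⋃ (ij : Fin s × Fin s) (_ : ij.1 ≠ ij.2),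
      {x | (p ij.1 - p ij.2).IsRoot x} with hS
  have hfin : S.Finite := by
    apply Set.Finite.biUnion (Set.finite_univ.subset (Set.subset_univ _))
    intro ij hij
    exact Polynomial.finite_setOf_isRoot (hpne ij.1 ij.2 hij)
  obtain ⟨x, hx⟩ := hfin.infinite_compl.nonempty
  refine ⟨x, ?_⟩
  intro i j heq
  by_contra hne
  apply hx
  rw [hS]
  refine Set.mem_iUnion.mpr ⟨(i, j), Set.mem_iUnion.mpr ⟨hne, ?_⟩⟩
  have heval : ∀ m : Fin s, (p m).eval x = ∑ k : Fin t, (B m k : ℝ) * x ^ (k:ℕ) := by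
    intro m
    rw [hp]
    simp [Polynomial.eval_finset_sum, Polynomial.eval_monomial]
  simp only [Set.mem_setOf_eq, Polynomial.IsRoot, Polynomial.eval_sub]
  rw [heval, heval]
  simpa using sub_eq_zero.mpr heq

/-- The sign function of the paper: `sign x = 1` if `x > 0` and `-1` if `x ≤ 0`. -/
noncomputable def sgn (x : ℝ) : ℝ := if 0 < x then 1 else -1

/-- Lemma 9 of Morris et al.: for a natural matrix `B` with pairwise
distinct rows there is a real matrix `X` such that `sign(BX − J)` is non-singular. -/
theorem sign_matrix_nonsingular {s t : ℕ} (B : Matrix (Fin s) (Fin t) ℕ)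
    (hB : ∀ i j : Fin s, i ≠ j → B i ≠ B j) :
    ∃ X : Matrix (Fin t) (Fin s) ℝ,
      (Matrix.of fun i j : Fin s =>
        sgn (((B.map (Nat.cast : ℕ → ℝ)) * X) i j - 1)).det ≠ 0 := by
  obtain ⟨x, hx⟩ := exists_inj_eval B hB
  set a : Fin s → ℝ := fun i => ∑ k : Fin t, (B i k : ℝ) * x ^ (k:ℕ) with ha
  set σ : Equiv.Perm (Fin s) := Tuple.sort a with hσ
  set b : Fin s → ℝ := a ∘ σ with hb
  have hbmono : StrictMono b :=
    (Tuple.monotone_sort a).strictMono_of_injective (hx.comp σ.injective)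
  -- previous value
  set prev : Fin s → ℝ := fun j =>
    if h : (j:ℕ) = 0 then b j - 2
    else b ⟨(j:ℕ)-1, lt_of_le_of_lt (Nat.sub_le _ _) j.isLt⟩ with hprev
  have hprev_lt : ∀ j, prev j < b j := by
    intro j
    simp only [hprev]
    by_cases h : (j:ℕ) = 0
    · rw [dif_pos h]; linarith
    · rw [dif_neg h]
      exact hbmono (by rw [Fin.lt_def]; simp; omega)
  have hprev_ge : ∀ i j : Fin s, (i:ℕ) < (j:ℕ) → b i ≤ prev j := by
    intro i j hij
    have h : (j:ℕ) ≠ 0 := by omega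
    simp only [hprev]
    rw [dif_neg h]
    exact hbmono.monotone (by rw [Fin.le_def]; simp; omega)
  -- thresholds
  set θ : Fin s → ℝ := fun j =>
    if (prev j + b j)/2 = 0 then b j / 2 else (prev j + b j)/2 with hθdef
  have hθ : ∀ j, prev j < θ j ∧ θ j < b j ∧ θ j ≠ 0 := by
    intro j
    have h1 := hprev_lt j
    simp only [hθdef]
    by_cases h : (prev j + b j)/2 = 0
    · have h2 : prev j + b j = 0 := by
        rcases div_eq_zero_iff.mp h with h' | h'
        · exact h'
        · norm_num at h'
      have h3 : 0 < b j := by linarith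
      rw [if_pos h]
      refine ⟨by linarith, by linarith, by positivity⟩
    · rw [if_neg h]
      exact ⟨by linarith, by linarith, h⟩
  have key : ∀ i j : Fin s, θ j < b i ↔ (j:ℕ) ≤ (i:ℕ) := by
    intro i j
    constructor
    · intro h
      by_contra hc
      push_neg at hc
      have := hprev_ge i j hc
      have := (hθ j).1
      linarith
    · intro h
      have : b j ≤ b i := hbmono.monotone (by rwa [Fin.le_def])
      have := (hθ j).2.1
      linarith
  have hne : ∀ i j : Fin s, a i ≠ θ j := by
    intro i j
    have : a i = b (σ.symm i) := by rw [hb]; simp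
    rw [this]
    rcases le_or_gt (j:ℕ) ((σ.symm i : Fin s) : ℕ) with h | h
    · exact ((key _ j).mpr h).ne'
    · have h1 := hprev_ge (σ.symm i) j h
      have h2 := (hθ j).1
      intro hcontra; linarith
  -- the witness matrix
  set X : Matrix (Fin t) (Fin s) ℝ :=
    Matrix.of fun (k : Fin t) (j : Fin s) => x ^ (k:ℕ) / θ j with hX
  refine ⟨X, ?_⟩
  have hentry : ∀ i j : Fin s, ((B.map (Nat.cast : ℕ → ℝ)) * X) i j = a i / θ j := by
    intro i j
    have ha' : a i = ∑ k : Fin t, (B i k : ℝ) * x ^ (k:ℕ) := by rw [ha]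
    rw [Matrix.mul_apply, ha', Finset.sum_div]
    refine Finset.sum_congr rfl fun k _ => ?_
    simp [Matrix.map_apply, hX]
    ring
  set N : Matrix (Fin s) (Fin s) ℝ :=
    Matrix.of fun i j => if θ j < a i then (1:ℝ) else -1 with hN
  set d : Fin s → ℝ := fun j => if 0 < θ j then (1:ℝ) else -1 with hd
  have hfact : (Matrix.of fun i j : Fin s =>
      sgn (((B.map (Nat.cast : ℕ → ℝ)) * X) i j - 1)) = N * Matrix.diagonal d := by
    ext i j
    rw [Matrix.mul_diagonal, Matrix.of_apply, hentry i j]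
    have hθne := (hθ j).2.2
    have hratio : a i / θ j - 1 = (a i - θ j) / θ j := by
      field_simp
    rw [hratio]
    unfold sgn
    rcases lt_or_gt_of_ne hθne with hneg | hpos
    · simp only [hN, hd, Matrix.of_apply]
      rw [if_neg (not_lt.mpr hneg.le)]
      rcases lt_or_gt_of_ne (hne i j) with h | h
      · -- a i < θ j : numerator negative, denominator negative, ratio positive
        have : 0 < (a i - θ j) / θ j := div_pos_of_neg_of_neg (by linarith) hneg
        rw [if_pos this, if_neg (not_lt.mpr h.le)]
        norm_num
      · -- θ j < a i : ratio negative
        have : (a i - θ j) / θ j < 0 := div_neg_of_pos_of_neg (by linarith) hneg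
        rw [if_neg (not_lt.mpr this.le), if_pos h]
        norm_num
    · simp only [hN, hd, Matrix.of_apply]
      rw [if_pos hpos]
      rcases lt_or_gt_of_ne (hne i j) with h | h
      · have : (a i - θ j) / θ j < 0 := div_neg_of_neg_of_pos (by linarith) hpos
        rw [if_neg (not_lt.mpr this.le), if_neg (not_lt.mpr h.le)]
        norm_num
      · have : 0 < (a i - θ j) / θ j := div_pos (by linarith) hpos
        rw [if_pos this, if_pos h]
        norm_num
  rw [hfact, Matrix.det_mul, Matrix.det_diagonal]
  have hdprod : ∏ j, d j ≠ 0 := by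
    rw [Finset.prod_ne_zero_iff]
    intro j _
    simp only [hd]
    split_ifs <;> norm_num
  have hNdet : N.det ≠ 0 := by
    have hsub : N.submatrix σ id =
        Matrix.of fun i j : Fin s => if (j:ℕ) ≤ (i:ℕ) then (1:ℝ) else -1 := by
      ext i j
      rw [Matrix.submatrix_apply, id, hN, Matrix.of_apply, Matrix.of_apply]
      have : a (σ i) = b i := by rw [hb]; simp
      rw [this] at *
      by_cases h : (j:ℕ) ≤ (i:ℕ)
      · rw [if_pos ((key i j).mpr h), if_pos h]
      · rw [if_neg (fun hc => h ((key i j).mp hc)), if_neg h]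
    have hperm := Matrix.det_permute σ N
    rw [hsub] at hperm
    intro h0
    rw [h0, mul_zero] at hperm
    exact detL_ne_zero s hperm
  exact mul_ne_zero hNdet hdprod
end

section
/- Let G be a labeled multi-relational graph on vertex set [n] with adjacency matrices A_1, ..., A_r, and let F ∈ ℝ^{n×d} be row-independent modulo equality whose rows, viewed as a coloring, equal some coloring C. Then there exist matrices W_0, W_1 ∈ ℝ^{d×e} and scalars α_1, ..., α_r ∈ ℝ such that F' = sign(F W_0 + Σ_{i∈[r]} α_i A_i F W_1 − J) is row-independent modulo equality, and rows v, w of F' are equal if and only if vertices v and w receive the same color under one refinement step of the multi-relational 1-WL applied to C. -/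
/-- A matrix is row-independent modulo equality if its set of distinct rows is a
linearly independent family of vectors. -/
def RowIndepModEq {n e : ℕ} (F : Matrix (Fin n) (Fin e) ℝ) : Prop :=
  LinearIndependent ℝ ((↑) : (Set.range fun v => F v) → (Fin e → ℝ))

/-!
Because the distinct rows of `F` are linearly independent, `F W` can realise any function of the
colour, so a single layer can make the pre-activation at `(v, j)` equal to `s v / τ j`, where
`s v` is a base-`b` numeral whose digits count the pairs (colour, relation) in the message of `v`
together with the colour of `v`. With `b` larger than every count, `s v` determines the refined
colour. Taking the thresholds `τ` to be `s u ± 1/2`, the layer outputs the ±1 staircase matrix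
`[τ j < s v]`; the difference of its two columns for `u` is twice the indicator of the class of
`u`, which gives both the row equalities and the independence of the distinct rows.
-/

theorem Multiset.eq_of_sum_map_pow_eq {b : ℕ} {s t : Multiset ℕ}
    (hs : ∀ k, s.count k < b) (ht : ∀ k, t.count k < b)
    (h : (s.map (b ^ ·)).sum = (t.map (b ^ ·)).sum) : s = t := by
  classical
  obtain ⟨M, hM⟩ : ∃ M, ∀ k ∈ s + t, k < M := ⟨(s + t).sup + 1, fun k hk =>
    Nat.lt_succ_of_le (Multiset.le_sup hk)⟩
  have digits : ∀ u ≤ s + t,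
      (u.map (b ^ ·)).sum = ∑ k : Fin M, u.count (k : ℕ) * b ^ (k : ℕ) := by
    intro u hu
    rw [Finset.sum_multiset_map_count, ← Finset.sum_range (fun k => u.count k * b ^ k)]
    refine Finset.sum_subset (fun k hk => Finset.mem_range.2 <| hM k <|
      Multiset.mem_of_le hu (Multiset.mem_toFinset.1 hk)) fun k _ hk => ?_
    rw [Multiset.count_eq_zero.2 (mt Multiset.mem_toFinset.2 hk), zero_smul]
  have hcode : finFunctionFinEquiv (fun k : Fin M => (⟨s.count (k : ℕ), hs k⟩ : Fin b)) =
      finFunctionFinEquiv (fun k : Fin M => (⟨t.count (k : ℕ), ht k⟩ : Fin b)) := by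
    ext
    simp only [finFunctionFinEquiv_apply]
    rw [← digits s le_self_add, ← digits t le_add_self, h]
  ext k
  by_cases hk : k < M
  · exact congrArg Fin.val (congrFun (finFunctionFinEquiv.injective hcode) ⟨k, hk⟩)
  · have hk' : k ∉ s + t := fun h => hk (hM k h)
    rw [Multiset.mem_add, not_or] at hk'
    rw [Multiset.count_eq_zero.2 hk'.1, Multiset.count_eq_zero.2 hk'.2]

section RwlMsg

variable {V : Type*} {r : ℕ} (N : Fin r → V → Finset V) (c : V → ℕ)

theorem mem_rwlMsg {v : V} {p : ℕ × ℕ} :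
    p ∈ rwlMsg N c v ↔ ∃ i, ∃ u ∈ N i v, (c u, (i : ℕ)) = p := by
  simp [rwlMsg, Multiset.mem_sum]

theorem sum_map_rwlMsg {M : Type*} [AddCommMonoid M] (g : ℕ × ℕ → M) (v : V) :
    ((rwlMsg N c v).map g).sum = ∑ i, ∑ u ∈ N i v, g (c u, i) := by
  rw [rwlMsg, ← Multiset.mapAddMonoidHom_apply, map_sum, Multiset.sum_sum]
  simp [Multiset.map_map]

theorem card_rwlMsg (v : V) : Multiset.card (rwlMsg N c v) = ∑ i, (N i v).card := by
  simp [rwlMsg]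

theorem cons_rwlMsg_inj {v w : V}
    (h : (c v, r) ::ₘ rwlMsg N c v = (c w, r) ::ₘ rwlMsg N c w) :
    c v = c w ∧ rwlMsg N c v = rwlMsg N c w := by
  rcases Multiset.cons_eq_cons.1 h with ⟨hvw, hmsg⟩ | ⟨-, cs, hv, -⟩
  · exact ⟨congrArg Prod.fst hvw, hmsg⟩
  · obtain ⟨i, u, -, hu⟩ := (mem_rwlMsg N c).1 (hv ▸ Multiset.mem_cons_self _ _)
    exact (i.isLt.ne (congrArg Prod.snd hu)).elim

/-- The base-`b` numeral whose digit at position `K * i + k` counts the neighbours of colour `k`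
in relation `i`; the vertex's own colour is recorded as relation `r`. -/
def rwlCode (b K : ℕ) (v : V) : ℕ :=
  (((c v, r) ::ₘ rwlMsg N c v).map fun p => b ^ (K * p.2 + p.1)).sum

theorem rwlCode_eq (b K : ℕ) (v : V) :
    rwlCode N c b K v = b ^ (K * r + c v) + ∑ i, ∑ u ∈ N i v, b ^ (K * i + c u) := by
  simp [rwlCode, sum_map_rwlMsg]

theorem rwlCode_pos {b : ℕ} (hb : 0 < b) (K : ℕ) (v : V) : 0 < rwlCode N c b K v := by
  rw [rwlCode_eq]; positivity

theorem rwlCode_eq_iff [Fintype V] {b K : ℕ} (hc : ∀ v, c v < K)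
    (hb : r * Fintype.card V + 1 < b) (v w : V) :
    rwlCode N c b K v = rwlCode N c b K w ↔ c v = c w ∧ rwlMsg N c v = rwlMsg N c w := by
  set pos : ℕ × ℕ → ℕ := fun p => K * p.2 + p.1
  have hcode : ∀ x, rwlCode N c b K x =
      ((((c x, r) ::ₘ rwlMsg N c x).map pos).map (b ^ ·)).sum := by
    simp [rwlCode, Multiset.map_map, pos]
  have hdecode : ∀ x, (((c x, r) ::ₘ rwlMsg N c x).map pos).map (fun q => (q % K, q / K)) =
      (c x, r) ::ₘ rwlMsg N c x := by
    intro x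
    rw [Multiset.map_map]
    refine (Multiset.map_congr rfl fun p hp => ?_).trans (Multiset.map_id _)
    have hp1 : p.1 < K := by
      rcases Multiset.mem_cons.1 hp with rfl | hp
      · exact hc x
      · obtain ⟨i, u, -, rfl⟩ := (mem_rwlMsg N c).1 hp
        exact hc u
    simp [pos, Nat.mod_eq_of_lt hp1, Nat.mul_add_div (by omega : 0 < K), Nat.div_eq_of_lt hp1]
  have hcount : ∀ x k, (((c x, r) ::ₘ rwlMsg N c x).map pos).count k < b := by
    refine fun x k => (Multiset.count_le_card _ _).trans_lt (lt_of_le_of_lt ?_ hb)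
    rw [Multiset.card_map, Multiset.card_cons, card_rwlMsg, add_le_add_iff_right]
    calc ∑ i, (N i x).card ≤ ∑ _i : Fin r, Fintype.card V :=
          Finset.sum_le_sum fun i _ => Finset.card_le_univ _
      _ = r * Fintype.card V := by simp
  refine ⟨fun h => cons_rwlMsg_inj N c ?_, fun ⟨h1, h2⟩ => by rw [rwlCode, rwlCode, h1, h2]⟩
  rw [← hdecode v, ← hdecode w,
    Multiset.eq_of_sum_map_pow_eq (hcount v) (hcount w) (by rw [← hcode, ← hcode, h])]

end RwlMsg

open Matrix

theorem RowIndepModEq.exists_linearMap {n d : ℕ} {M : Type*} [AddCommGroup M] [Module ℝ M]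
    {F : Matrix (Fin n) (Fin d) ℝ} (hF : RowIndepModEq F) (g : Fin n → M)
    (hg : ∀ v w, F v = F w → g v = g w) :
    ∃ Ψ : (Fin d → ℝ) →ₗ[ℝ] M, ∀ v, Ψ (F v) = g v := by
  classical
  have hF' : LinearIndepOn ℝ id (Set.range fun v => F v) := hF
  let B := Module.Basis.extend hF'
  refine ⟨B.constr ℝ fun x => if h : ∃ v, F v = x then g h.choose else 0, fun v => ?_⟩
  have hmem : F v ∈ hF'.extend (Set.subset_univ _) := Module.Basis.subset_extend hF' ⟨v, rfl⟩
  calc B.constr ℝ _ (F v) = B.constr ℝ _ (B ⟨F v, hmem⟩) := by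
        rw [Module.Basis.extend_apply_self]
    _ = g v := by
        rw [Module.Basis.constr_basis, dif_pos ⟨v, rfl⟩]
        exact hg _ _ (Exists.choose_spec (⟨v, rfl⟩ : ∃ w, F w = F v))

theorem Matrix.mul_transpose_toMatrix'_apply {R : Type*} [CommSemiring R] {l m k : Type*}
    [Fintype m] [DecidableEq m] [Fintype k] (F : Matrix l m R) (Ψ : (m → R) →ₗ[R] k → R)
    (v : l) (j : k) :
    (F * (LinearMap.toMatrix' Ψ)ᵀ) v j = Ψ (F v) j := by
  change (F v ᵥ* _) j = _
  rw [Matrix.vecMul_transpose, LinearMap.toMatrix'_mulVec]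

theorem RowIndepModEq.exists_mul_eq {n d e : ℕ} {F : Matrix (Fin n) (Fin d) ℝ}
    (hF : RowIndepModEq F) (G : Matrix (Fin n) (Fin e) ℝ)
    (hG : ∀ v w, F v = F w → G v = G w) :
    ∃ W : Matrix (Fin d) (Fin e) ℝ, F * W = G := by
  obtain ⟨Ψ, hΨ⟩ := hF.exists_linearMap (fun v => G v) hG
  exact ⟨(LinearMap.toMatrix' Ψ)ᵀ, Matrix.ext fun v j => by
    rw [Matrix.mul_transpose_toMatrix'_apply, hΨ]⟩

theorem rowIndepModEq_of_dual {n e : ℕ} {F : Matrix (Fin n) (Fin e) ℝ}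
    (φ : Fin n → (Fin e → ℝ) →ₗ[ℝ] ℝ)
    (hφ : ∀ v w, φ v (F w) = if F w = F v then 1 else 0) :
    RowIndepModEq F := by
  rw [RowIndepModEq, linearIndependent_iff']
  intro t g hg y hy
  obtain ⟨v, hv⟩ := y.2
  have hφy : ∀ y' : Set.range fun v => F v, φ v y' = if y' = y then 1 else 0 := by
    rintro ⟨-, w, rfl⟩
    simp [hφ, Subtype.ext_iff, hv]
  simpa [hφy, hy] using congrArg (φ v) hg

theorem Matrix.mul_apply_eq_sum_of_row_eq_indicator {R : Type*} [Semiring R] {l m k : Type*}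
    [Fintype m] [DecidableEq m] {A : Matrix l m R} {v : l} {S : Finset m}
    (hA : ∀ w, A v w = if w ∈ S then 1 else 0) (M : Matrix m k R) (j : k) :
    (A * M) v j = ∑ u ∈ S, M u j := by
  simp [Matrix.mul_apply, hA]

theorem sgn_mul_inv_sub_one {x τ : ℝ} (hτ : 0 < τ) :
    sgn (x * τ⁻¹ - 1) = if τ < x then 1 else -1 := by
  simp only [sgn, sub_pos, ← div_eq_mul_inv, one_lt_div hτ]

section Staircase

variable {n : ℕ}

noncomputable def thresholds (s : Fin n → ℤ) : Fin (n + n) → ℝ :=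
  Fin.append (fun u => (s u : ℝ) - 1 / 2) fun u => (s u : ℝ) + 1 / 2

noncomputable def staircase (s : Fin n → ℤ) : Matrix (Fin n) (Fin (n + n)) ℝ :=
  Matrix.of fun v j => if thresholds s j < s v then 1 else -1

theorem staircase_castAdd_sub_natAdd (s : Fin n → ℤ) (w u : Fin n) :
    staircase s w (Fin.castAdd n u) - staircase s w (Fin.natAdd n u) =
      if s w = s u then 2 else 0 := by
  simp only [staircase, thresholds, Matrix.of_apply, Fin.append_left, Fin.append_right]
  rcases lt_trichotomy (s w) (s u) with h | h | h
  · have : (s w : ℝ) + 1 ≤ s u := by exact_mod_cast h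
    rw [if_neg (by linarith), if_neg (by linarith), if_neg h.ne]
    norm_num
  · rw [h, if_pos (by linarith), if_neg (by linarith), if_pos rfl]
    norm_num
  · have : (s u : ℝ) + 1 ≤ s w := by exact_mod_cast h
    rw [if_pos (by linarith), if_pos (by linarith), if_neg h.ne']
    norm_num

theorem staircase_eq_iff (s : Fin n → ℤ) (v w : Fin n) :
    staircase s v = staircase s w ↔ s v = s w := by
  refine ⟨fun h => ?_, fun h => funext fun j => by simp [staircase, h]⟩
  have hv : staircase s v (Fin.castAdd n v) - staircase s v (Fin.natAdd n v) =
      staircase s w (Fin.castAdd n v) - staircase s w (Fin.natAdd n v) := by rw [h]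
  by_contra hne
  rw [staircase_castAdd_sub_natAdd, staircase_castAdd_sub_natAdd, if_pos rfl,
    if_neg (Ne.symm hne)] at hv
  norm_num at hv

theorem rowIndepModEq_staircase (s : Fin n → ℤ) : RowIndepModEq (staircase s) := by
  refine rowIndepModEq_of_dual (fun v => (1 / 2 : ℝ) •
    (LinearMap.proj (R := ℝ) (φ := fun _ => ℝ) (Fin.castAdd n v) -
      LinearMap.proj (Fin.natAdd n v))) fun v w => ?_
  simp only [LinearMap.smul_apply, LinearMap.sub_apply, LinearMap.proj_apply,
    staircase_castAdd_sub_natAdd, staircase_eq_iff]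
  split_ifs <;> norm_num

theorem thresholds_pos {s : Fin n → ℤ} (hs : ∀ u, 0 < s u) (j : Fin (n + n)) :
    0 < thresholds s j := by
  have h1 : ∀ u, (1 : ℝ) ≤ s u := fun u => by exact_mod_cast hs u
  refine Fin.addCases (fun u => ?_) (fun u => ?_) j <;>
    simp only [thresholds, Fin.append_left, Fin.append_right] <;> linarith [h1 u]

end Staircase

/-- key lemma: one CompGCN layer with vector scaling can simulate a
refinement step of the multi-relational 1-WL, producing a row-independent-modulo-
equality feature matrix `F' = sign(F W₀ + Σ_i α_i A_i F W₁ − J)` whose row equality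
coincides with the refined coloring. -/
theorem compgcn_simulates_rwl_step {n d r : ℕ}
    (N : Fin r → Fin n → Finset (Fin n))
    (A : Fin r → Matrix (Fin n) (Fin n) ℝ)
    (hA : ∀ i v w, A i v w = if w ∈ N i v then 1 else 0)
    (F : Matrix (Fin n) (Fin d) ℝ)
    (hF : RowIndepModEq F)
    (Ccol : Fin n → ℕ)
    (hFC : ∀ v w, F v = F w ↔ Ccol v = Ccol w) :
    ∃ (e : ℕ) (W0 W1 : Matrix (Fin d) (Fin e) ℝ) (α : Fin r → ℝ)
      (F' : Matrix (Fin n) (Fin e) ℝ),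
      F' = (Matrix.of fun v j =>
        sgn ((F * W0 + ∑ i : Fin r, α i • (A i * (F * W1))) v j - 1)) ∧
      RowIndepModEq F' ∧
      ∀ v w : Fin n, (F' v = F' w ↔
        (Ccol v = Ccol w ∧ rwlMsg N Ccol v = rwlMsg N Ccol w)) := by
  set b := r * n + 2
  set K := Finset.univ.sup Ccol + 1
  have hK : ∀ v, Ccol v < K := fun v => Nat.lt_succ_of_le (Finset.le_sup (Finset.mem_univ v))
  set s : Fin n → ℤ := fun v => rwlCode N Ccol b K v
  have hs : ∀ u, 0 < s u := fun u => Int.natCast_pos.2 (rwlCode_pos N Ccol (Nat.succ_pos _) K u)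
  obtain ⟨W0, hW0⟩ := hF.exists_mul_eq
    (of fun v j => (b : ℝ) ^ (K * r + Ccol v) * (thresholds s j)⁻¹)
    fun v w h => funext fun j => by simp [(hFC v w).1 h]
  obtain ⟨W1, hW1⟩ := hF.exists_mul_eq
    (of fun v j => (b : ℝ) ^ Ccol v * (thresholds s j)⁻¹)
    fun v w h => funext fun j => by simp [(hFC v w).1 h]
  have hX : ∀ v j,
      (F * W0 + ∑ i : Fin r, ((b : ℝ) ^ (K * (i : ℕ))) • (A i * (F * W1))) v j =
        s v * (thresholds s j)⁻¹ := by
    intro v j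
    simp only [hW0, hW1, Matrix.add_apply, Matrix.sum_apply, Matrix.smul_apply,
      Matrix.mul_apply_eq_sum_of_row_eq_indicator (hA _ v), of_apply, s, rwlCode_eq, smul_eq_mul]
    push_cast
    simp only [add_mul, Finset.sum_mul, Finset.mul_sum, pow_add, mul_assoc]
  refine ⟨n + n, W0, W1, fun i => (b : ℝ) ^ (K * (i : ℕ)), staircase s, ?_,
    rowIndepModEq_staircase s, fun v w => ?_⟩
  · ext v j
    rw [Matrix.of_apply, hX, sgn_mul_inv_sub_one (thresholds_pos hs j)]
    rfl
  · rw [staircase_eq_iff, Nat.cast_inj]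
    exact rwlCode_eq_iff N Ccol hK (by simp [b]) v w
end

section
/- Let K be the complete graph on k+1 vertices, and let G_k be the CFI-type graph whose vertices are (a) pairs (v, S) with v ∈ V(K) and S an even-cardinality subset of the edge set E(v) incident to v, and (b) two vertices e^0, e^1 for each edge e of K; with edges {e^0, e^1} for each e, an edge between (v,S) and e^1 whenever v ∈ e and e ∈ S, and an edge between (v,S) and e^0 whenever v ∈ e and e ∉ S. Then G_k contains a distance-two-clique of size k+1, i.e., a set of k+1 vertices that are pairwise at distance exactly 2. -/
/-- Edges of the complete graph `K` on `k+1` vertices, as ordered pairs `p.1 < p.2`. -/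
abbrev CFIEdge (k : ℕ) := {p : Fin (k + 1) × Fin (k + 1) // p.1 < p.2}

/-- Incidence of a base vertex with a base edge. -/
def cfiInc {k : ℕ} (v : Fin (k + 1)) (e : CFIEdge k) : Prop :=
  v = e.1.1 ∨ v = e.1.2

/-- Vertices of the CFI-type graph `G_k`: pairs `(v, S)` with `S` an even subset of
the edges incident to `v`, plus two vertices `(e, false) = e⁰`, `(e, true) = e¹`
per base edge `e`. -/
abbrev CFIVtx (k : ℕ) :=
  (Σ v : Fin (k + 1),
    {S : Finset (CFIEdge k) // (∀ e ∈ S, cfiInc v e) ∧ Even S.card}) ⊕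
  (CFIEdge k × Bool)

/-- The adjacency relation of `G_k`. -/
def cfiRel (k : ℕ) : CFIVtx k → CFIVtx k → Prop
  | Sum.inr (e, b), Sum.inr (e', b') => e = e' ∧ b ≠ b'
  | Sum.inl ⟨v, S⟩, Sum.inr (e, b) => cfiInc v e ∧ (e ∈ S.val ↔ b = true)
  | Sum.inr (e, b), Sum.inl ⟨v, S⟩ => cfiInc v e ∧ (e ∈ S.val ↔ b = true)
  | _, _ => False

/-- The CFI-type graph `G_k`. -/
def cfiGraph (k : ℕ) : SimpleGraph (CFIVtx k) := SimpleGraph.fromRel (cfiRel k)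

/-- `G_k` contains a distance-two-clique of size `k+1`, i.e., `k+1`
distinct vertices pairwise at (shortest-path) distance exactly 2. -/
theorem cfi_distance_two_clique (k : ℕ) :
    ∃ f : Fin (k + 1) → CFIVtx k, Function.Injective f ∧
      ∀ i j, i ≠ j → (cfiGraph k).dist (f i) (f j) = 2 := by
  refine ⟨fun i => Sum.inl ⟨i, ⟨∅, by simp⟩⟩, ?_, ?_⟩
  · intro i j h
    simpa using congrArg (fun x => match x with | Sum.inl p => p.1 | Sum.inr _ => 0) h
  · intro i j hij
    -- the connecting edge
    obtain ⟨e, hei, hej⟩ : ∃ e : CFIEdge k, cfiInc i e ∧ cfiInc j e := by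
      rcases lt_or_gt_of_ne hij with h | h
      · exact ⟨⟨(i, j), h⟩, Or.inl rfl, Or.inr rfl⟩
      · exact ⟨⟨(j, i), h⟩, Or.inr rfl, Or.inl rfl⟩
    have hadj : ∀ (v : Fin (k+1)), cfiInc v e →
        (cfiGraph k).Adj (Sum.inl ⟨v, ⟨∅, by simp⟩⟩) (Sum.inr (e, false)) := by
      intro v hv
      refine ⟨by simp, Or.inl ?_⟩
      exact ⟨hv, by simp⟩
    have h1 := hadj i hei
    have h2 := hadj j hej
    have w : (cfiGraph k).Walk (Sum.inl ⟨i, ⟨∅, by simp⟩⟩) (Sum.inl ⟨j, ⟨∅, by simp⟩⟩) :=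
      SimpleGraph.Walk.cons h1 (SimpleGraph.Walk.cons h2.symm SimpleGraph.Walk.nil)
    have hle : (cfiGraph k).dist (Sum.inl ⟨i, ⟨∅, by simp⟩⟩) (Sum.inl ⟨j, ⟨∅, by simp⟩⟩) ≤ 2 :=
      by simpa using SimpleGraph.dist_le (SimpleGraph.Walk.cons h1 (SimpleGraph.Walk.cons h2.symm SimpleGraph.Walk.nil))
    have hne : (Sum.inl ⟨i, ⟨∅, by simp⟩⟩ : CFIVtx k) ≠ Sum.inl ⟨j, ⟨∅, by simp⟩⟩ := by
      intro h
      exact hij (by simpa using congrArg (fun x => match x with | Sum.inl p => p.1 | Sum.inr _ => 0) h)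
    have hnadj : ¬ (cfiGraph k).Adj (Sum.inl ⟨i, ⟨∅, by simp⟩⟩) (Sum.inl ⟨j, ⟨∅, by simp⟩⟩) := by
      rintro ⟨-, h | h⟩ <;> exact h.elim
    have h0 : (cfiGraph k).dist (Sum.inl ⟨i, ⟨∅, by simp⟩⟩) (Sum.inl ⟨j, ⟨∅, by simp⟩⟩) ≠ 0 := by
      intro h
      rcases SimpleGraph.dist_eq_zero_iff_eq_or_not_reachable.mp h with h' | h'
      · exact hne h'
      · exact h' ⟨w⟩
    have h1' : (cfiGraph k).dist (Sum.inl ⟨i, ⟨∅, by simp⟩⟩) (Sum.inl ⟨j, ⟨∅, by simp⟩⟩) ≠ 1 := by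
      intro h
      exact hnadj (SimpleGraph.dist_eq_one_iff_adj.mp h)
    show (cfiGraph k).dist (Sum.inl ⟨i, ⟨∅, by simp⟩⟩) (Sum.inl ⟨j, ⟨∅, by simp⟩⟩) = 2
    omega
end

section
/- For every labeled multi-relational graph G and t ≥ 0: if vertices v and w satisfy C_WR^(t)(v) = C_WR^(t)(w) under the weak multi-relational 1-WL, then any CompGCN with concatenation composition map assigns them equal features at layer t, for every choice of parameters and initial features consistent with the labeling. Formally, by induction: equal weak colors at step t−1, equal multisets {{h_u^(t−1) : i ∈ [r], u ∈ N_i(v)}} = {{h_u^(t−1) : i ∈ [r], u ∈ N_i(w)}}, and |N_i(v)| = |N_i(w)| for all i imply h_v^(t) = h_w^(t). -/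
lemma append_split {d b : ℕ} (a : Fin d → ℝ) (c : Fin b → ℝ) :
    Fin.append a c = Fin.append a 0 + Fin.append (0 : Fin d → ℝ) c := by
  funext j
  cases j using Fin.addCases with
  | left j => simp
  | right j => simp

lemma append_zero_add {d b : ℕ} (a a' : Fin d → ℝ) :
    Fin.append (a + a') (0 : Fin b → ℝ) = Fin.append a 0 + Fin.append a' 0 := by
  funext j
  cases j using Fin.addCases with
  | left j => simp
  | right j => simp

lemma append_zero_zero {d b : ℕ} :
    Fin.append (0 : Fin d → ℝ) (0 : Fin b → ℝ) = 0 := by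
  funext j
  cases j using Fin.addCases with
  | left j => simp
  | right j => simp

/-- the weak multi-relational 1-WL upper bounds CompGCN with the
concatenation composition map: vertices with equal weak WL colors at step `t` get
equal features at layer `t`, for every choice of parameters and of initial features
consistent with the labeling. -/
theorem weak_rwl_bounds_compgcn_concat {V : Type*} [Fintype V] {r d b : ℕ}
    (N : Fin r → V → Finset V) (ℓ : V → ℕ) (CWR : ℕ → V → ℕ)
    (hW0 : ∀ v w, CWR 0 v = CWR 0 w ↔ ℓ v = ℓ w)
    (hW : ∀ t v w, CWR (t + 1) v = CWR (t + 1) w ↔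
      (CWR t v = CWR t w ∧ wrwlMsg N (CWR t) v = wrwlMsg N (CWR t) w ∧
        ∀ i, (N i v).card = (N i w).card))
    (σ : ℕ → ℝ → ℝ)
    (W0 : ℕ → Matrix (Fin d) (Fin d) ℝ)
    (W1 : ℕ → Matrix (Fin (d + b)) (Fin d) ℝ)
    (z : ℕ → Fin r → Fin b → ℝ)
    (h : ℕ → V → Fin d → ℝ)
    (h0 : ∀ v w, h 0 v = h 0 w ↔ ℓ v = ℓ w)
    (hstep : ∀ t v, h (t + 1) v = fun j =>
      σ t ((Matrix.vecMul (h t v) (W0 t) +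
        ∑ i : Fin r, ∑ u ∈ N i v,
          Matrix.vecMul (Fin.append (h t u) (z t i)) (W1 t)) j)) :
    ∀ t (v w : V), CWR t v = CWR t w → h t v = h t w := by
  intro t
  induction t with
  | zero => exact fun v w hvw => (h0 v w).mpr ((hW0 v w).mp hvw)
  | succ t ih =>
    intro v w hvw
    obtain ⟨hc, hmsg, hcard⟩ := (hW t v w).mp hvw
    have hft : Function.FactorsThrough (h t) (CWR t) := fun a b hab => ih a b hab
    set g := Function.extend (CWR t) (h t) 0 with hg
    have hgc : ∀ u, g (CWR t u) = h t u := fun u => hft.extend_apply 0 u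
    -- multiset of neighbor features equal
    have hmap : ∀ x : V, (∑ i : Fin r, (N i x).val.map (h t)) =
        Multiset.map g (wrwlMsg N (CWR t) x) := by
      intro x
      unfold wrwlMsg
      have hms : Multiset.map g (∑ i : Fin r, (N i x).val.map (CWR t)) =
          ∑ i : Fin r, Multiset.map g ((N i x).val.map (CWR t)) :=
        map_sum (Multiset.mapAddMonoidHom g) _ _
      rw [hms]
      refine Finset.sum_congr rfl fun i _ => ?_
      rw [Multiset.map_map]
      exact Multiset.map_congr rfl fun u _ => (hgc u).symm
    have hfeat : (∑ i : Fin r, (N i v).val.map (h t)) =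
        (∑ i : Fin r, (N i w).val.map (h t)) := by
      rw [hmap v, hmap w, hmsg]
    -- sum of neighbor features equal
    have hsum : (∑ i : Fin r, ∑ u ∈ N i v, h t u) =
        (∑ i : Fin r, ∑ u ∈ N i w, h t u) := by
      have : ∀ x : V, (∑ i : Fin r, ∑ u ∈ N i x, h t u) =
          (∑ i : Fin r, (N i x).val.map (h t)).sum := by
        intro x
        rw [← Multiset.coe_sumAddMonoidHom, map_sum]
        rfl
      rw [this v, this w, hfeat]
    -- key decomposition of the message sum
    have key : ∀ x : V,
        (∑ i : Fin r, ∑ u ∈ N i x, Matrix.vecMul (Fin.append (h t u) (z t i)) (W1 t)) =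
        Matrix.vecMul (Fin.append (∑ i : Fin r, ∑ u ∈ N i x, h t u) 0) (W1 t) +
        ∑ i : Fin r, (N i x).card • Matrix.vecMul (Fin.append (0 : Fin d → ℝ) (z t i)) (W1 t) := by
      intro x
      let L : (Fin d → ℝ) →+ (Fin d → ℝ) :=
        { toFun := fun a => Matrix.vecMul (Fin.append a (0 : Fin b → ℝ)) (W1 t)
          map_zero' := by
            show Matrix.vecMul (Fin.append (0 : Fin d → ℝ) (0 : Fin b → ℝ)) (W1 t) = 0
            rw [append_zero_zero, Matrix.zero_vecMul]
          map_add' := fun a a' => by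
            show Matrix.vecMul (Fin.append (a + a') (0 : Fin b → ℝ)) (W1 t) = _
            rw [append_zero_add, Matrix.add_vecMul] }
      have hL : ∀ a : Fin d → ℝ,
          Matrix.vecMul (Fin.append a (0 : Fin b → ℝ)) (W1 t) = L a := fun _ => rfl
      calc (∑ i : Fin r, ∑ u ∈ N i x, Matrix.vecMul (Fin.append (h t u) (z t i)) (W1 t))
          = ∑ i : Fin r, ∑ u ∈ N i x,
            (L (h t u) + Matrix.vecMul (Fin.append (0 : Fin d → ℝ) (z t i)) (W1 t)) := by
            refine Finset.sum_congr rfl fun i _ => Finset.sum_congr rfl fun u _ => ?_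
            rw [append_split, Matrix.add_vecMul, hL]
        _ = (∑ i : Fin r, ∑ u ∈ N i x, L (h t u)) +
            ∑ i : Fin r, (N i x).card • Matrix.vecMul (Fin.append (0 : Fin d → ℝ) (z t i)) (W1 t) := by
            rw [← Finset.sum_add_distrib]
            refine Finset.sum_congr rfl fun i _ => ?_
            rw [Finset.sum_add_distrib, Finset.sum_const]
        _ = _ := by
            congr 1
            rw [hL, map_sum]
            exact Finset.sum_congr rfl fun i _ => (map_sum L _ _).symm
    have hz : (∑ i : Fin r, (N i v).card • Matrix.vecMul (Fin.append (0 : Fin d → ℝ) (z t i)) (W1 t)) =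
        ∑ i : Fin r, (N i w).card • Matrix.vecMul (Fin.append (0 : Fin d → ℝ) (z t i)) (W1 t) :=
      Finset.sum_congr rfl fun i _ => by rw [hcard i]
    rw [hstep t v, hstep t w, ih v w hc, key v, key w, hsum, hz]
end

section
/- For every labeled multi-relational graph G and t ≥ 0: if the multi-relational 1-WL colors satisfy C_R^(t)(v) = C_R^(t)(w), then for every choice of initial features consistent with ℓ and every sequence of R-GCN parameters, the R-GCN features satisfy h_v^(t) = h_w^(t), where the R-GCN layer is h_v^(t) = σ(h_v^(t-1) W_0^(t) + Σ_{i∈[r]} Σ_{u∈N_i(v)} h_u^(t-1) W_i^(t)). -/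
/-- the multi-relational 1-WL upper bounds R-GCN: vertices with equal
multi-relational WL colors at step `t` get equal R-GCN features at layer `t`, for
every choice of parameters and of initial features consistent with the labeling. -/
theorem rwl_bounds_rgcn {V : Type*} [Fintype V] {r d : ℕ}
    (N : Fin r → V → Finset V) (ℓ : V → ℕ) (CR : ℕ → V → ℕ)
    (hR0 : ∀ v w, CR 0 v = CR 0 w ↔ ℓ v = ℓ w)
    (hR : ∀ t v w, CR (t + 1) v = CR (t + 1) w ↔
      (CR t v = CR t w ∧ rwlMsg N (CR t) v = rwlMsg N (CR t) w))
    (σ : ℕ → ℝ → ℝ)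
    (W0 : ℕ → Matrix (Fin d) (Fin d) ℝ)
    (W : ℕ → Fin r → Matrix (Fin d) (Fin d) ℝ)
    (h : ℕ → V → Fin d → ℝ)
    (h0 : ∀ v w, h 0 v = h 0 w ↔ ℓ v = ℓ w)
    (hstep : ∀ t v, h (t + 1) v = fun j =>
      σ t ((Matrix.vecMul (h t v) (W0 t) +
        ∑ i : Fin r, ∑ u ∈ N i v, Matrix.vecMul (h t u) (W t i)) j)) :
    ∀ t (v w : V), CR t v = CR t w → h t v = h t w := by
  intro t
  induction t with
  | zero =>
    intro v w hvw
    exact (h0 v w).mpr ((hR0 v w).mp hvw)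
  | succ t ih =>
    intro v w hvw
    obtain ⟨hc, hmsg⟩ := (hR t v w).mp hvw
    -- representative feature for each color
    classical
    set g : ℕ → Fin d → ℝ :=
      fun c => if hc : ∃ u : V, CR t u = c then h t hc.choose else 0 with hg
    have hgu : ∀ u : V, g (CR t u) = h t u := by
      intro u
      have he : ∃ u' : V, CR t u' = CR t u := ⟨u, rfl⟩
      simp only [hg, dif_pos he]
      exact ih he.choose u he.choose_spec
    set F : ℕ × ℕ → Fin d → ℝ :=
      fun p => if hi : p.2 < r then Matrix.vecMul (g p.1) (W t ⟨p.2, hi⟩) else 0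
        with hF
    have key : ∀ x : V,
        ∑ i : Fin r, ∑ u ∈ N i x, Matrix.vecMul (h t u) (W t i)
          = ((rwlMsg N (CR t) x).map F).sum := by
      intro x
      rw [rwlMsg]
      have e1 : Multiset.map F (∑ i : Fin r,
          Multiset.map (fun u => (CR t u, (i : ℕ))) (N i x).val)
          = ∑ i : Fin r, Multiset.map F
            (Multiset.map (fun u => (CR t u, (i : ℕ))) (N i x).val) :=
        map_sum (Multiset.mapAddMonoidHom F) _ _
      have e2 : (∑ i : Fin r, Multiset.map F
          (Multiset.map (fun u => (CR t u, (i : ℕ))) (N i x).val)).sum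
          = ∑ i : Fin r, (Multiset.map F
            (Multiset.map (fun u => (CR t u, (i : ℕ))) (N i x).val)).sum :=
        map_sum Multiset.sumAddMonoidHom _ _
      rw [e1, e2]
      refine Finset.sum_congr rfl fun i _ => ?_
      simp only [Multiset.map_map, Finset.sum_eq_multiset_sum]
      refine congrArg Multiset.sum (Multiset.map_congr rfl fun u _ => ?_)
      simp only [Function.comp_apply, hF]
      rw [dif_pos i.isLt, Fin.eta, hgu u]
    have hsum : Matrix.vecMul (h t v) (W0 t) +
        ∑ i : Fin r, ∑ u ∈ N i v, Matrix.vecMul (h t u) (W t i)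
      = Matrix.vecMul (h t w) (W0 t) +
        ∑ i : Fin r, ∑ u ∈ N i w, Matrix.vecMul (h t u) (W t i) := by
      rw [ih v w hc, key, key, hmsg]
    rw [hstep t v, hstep t w, hsum]
end

section
/- An R-GCN layer can exactly simulate a CompGCN layer with Hadamard-product composition: for any z_1, ..., z_r ∈ ℝ^d and W_1 ∈ ℝ^{d×e}, setting W_i = Λ_i W_1 where Λ_i = diag(z_i), we have for every multi-relational graph and every assignment of vertex features g: Σ_{i∈[r]} Σ_{w∈N_i(v)} (g_w * z_i) W_1 = Σ_{i∈[r]} Σ_{w∈N_i(v)} g_w W_i for all vertices v, where * is the entrywise product of row vectors. -/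
/-- an R-GCN layer exactly simulates a CompGCN layer with Hadamard-
product composition, via `W_i = diag(z_i) W₁`: for every vertex,
`Σ_i Σ_{w ∈ N_i(v)} (g_w * z_i) W₁ = Σ_i Σ_{w ∈ N_i(v)} g_w W_i`. -/
theorem rgcn_simulates_compgcn_mult {d e : ℕ} {V : Type*} {r : ℕ}
    (N : Fin r → V → Finset V) (g : V → Fin d → ℝ)
    (z : Fin r → Fin d → ℝ) (W1 : Matrix (Fin d) (Fin e) ℝ) :
    ∀ v : V,
      (∑ i : Fin r, ∑ w ∈ N i v, Matrix.vecMul (g w * z i) W1) =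
      ∑ i : Fin r, ∑ w ∈ N i v,
        Matrix.vecMul (g w) (Matrix.diagonal (z i) * W1) := by
  intro v
  refine Finset.sum_congr rfl fun i _ => Finset.sum_congr rfl fun w _ => ?_
  ext j
  simp [Matrix.vecMul, dotProduct, Matrix.mul_apply, Matrix.diagonal_apply,
    Finset.mul_sum, Finset.sum_mul, mul_assoc]
end
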